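/- arXiv:2410.09711 — 2 statements merged into one kernel-verified Lean document; each statement's English description precedes it below -/
import Mathlib

section
/- With the notation of the context (tangent surface of the helix γ(t) = (t,t²,t³) and the averaged measure ν built from a measure μ with Fourier decay exponent β/2), there is a constant C' > 0 such that |ν̂(ρ e₃)| ≤ C' ρ^{−β/2} for all ρ > 0, where e₃ = (0,0,1). In fact one may take C' = C‖ψ‖_{L¹}. -/
/-!
Shifting the first parameter of the tangent surface `Φ(t, v) = γ(t) + v γ'(t)` of the helix
changes the third coordinate by a polynomial identity:
`Φ₃(t - s, v) = ⟪Φ(t, v), (3s², -3s, 1)⟫ - s³`.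
Hence, up to a unimodular factor, the inner integral defining `ν̂(ρe₃)` at the shift `s` is
`μ̂(ρ(3s², -3s, 1))`, whose frequency has norm at least `ρ`; the decay of `μ̂` bounds it by
`Cρ^{-β/2}`, and averaging against `ψ ≥ 0` gives the factor `∫ ψ`.
-/

open MeasureTheory Real Set

/-- The Fourier transform of a measure on `ℝ^n`:  `μ̂(ξ) = ∫ e^{−2πi x·ξ} dμ(x)`. -/
noncomputable def mft {n : ℕ} (μ : Measure (EuclideanSpace ℝ (Fin n)))
    (ξ : EuclideanSpace ℝ (Fin n)) : ℂ :=
  ∫ x, Complex.exp (((-2 * Real.pi * inner ℝ x ξ : ℝ) : ℂ) * Complex.I) ∂μ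

/-- A point of `ℝ³` from three coordinates. -/
noncomputable def pt3 (x y z : ℝ) : EuclideanSpace ℝ (Fin 3) :=
  (EuclideanSpace.equiv (Fin 3) ℝ).symm ![x, y, z]

local notation "E³" => EuclideanSpace ℝ (Fin 3)

noncomputable def phase {n : ℕ} (ξ x : EuclideanSpace ℝ (Fin n)) : ℂ :=
  Complex.exp (((-2 * π * inner ℝ x ξ : ℝ) : ℂ) * Complex.I)

lemma mft_eq_integral_phase {n : ℕ} (μ : Measure (EuclideanSpace ℝ (Fin n)))
    (ξ : EuclideanSpace ℝ (Fin n)) : mft μ ξ = ∫ x, phase ξ x ∂μ := rfl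

lemma continuous_phase {n : ℕ} (ξ : EuclideanSpace ℝ (Fin n)) : Continuous (phase ξ) := by
  unfold phase
  fun_prop

lemma norm_phase {n : ℕ} (ξ x : EuclideanSpace ℝ (Fin n)) : ‖phase ξ x‖ = 1 := by
  simp [phase, Complex.norm_exp]

lemma mft_map {n : ℕ} {α : Type*} [MeasurableSpace α] (lam : Measure α)
    {F : α → EuclideanSpace ℝ (Fin n)} (hF : Measurable F) (ξ : EuclideanSpace ℝ (Fin n)) :
    mft (lam.map F) ξ = ∫ p, phase ξ (F p) ∂lam :=
  integral_map hF.aemeasurable (continuous_phase ξ).aestronglyMeasurable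

lemma norm_integral_phase_eq_of_inner_eq_add {n : ℕ} {α : Type*} [MeasurableSpace α]
    (lam : Measure α) {g F : α → EuclideanSpace ℝ (Fin n)} {ξ η : EuclideanSpace ℝ (Fin n)}
    (r : ℝ) (h : ∀ p, inner ℝ (g p) ξ = inner ℝ (F p) η + r) :
    ‖∫ p, phase ξ (g p) ∂lam‖ = ‖∫ p, phase η (F p) ∂lam‖ := by
  have hfactor : ∀ p, phase ξ (g p) =
      Complex.exp (((-2 * π * r : ℝ) : ℂ) * Complex.I) * phase η (F p) := by
    intro p
    rw [phase, phase, h, ← Complex.exp_add]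
    congr 1
    push_cast
    ring
  simp_rw [hfactor, integral_const_mul, norm_mul, Complex.norm_exp_ofReal_mul_I, one_mul]

lemma inner_pt3 (x y z x' y' z' : ℝ) :
    inner ℝ (pt3 x y z) (pt3 x' y' z') = x * x' + y * y' + z * z' := by
  simp only [pt3, PiLp.continuousLinearEquiv_symm_apply, PiLp.inner_apply, RCLike.inner_apply,
    ringHom_apply, Fin.sum_univ_three, Fin.isValue, Matrix.cons_val_zero, Matrix.cons_val_one,
    Matrix.cons_val]
  ring

lemma le_norm_pt3 (x y z : ℝ) : z ≤ ‖pt3 x y z‖ := by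
  rw [EuclideanSpace.norm_eq]
  apply Real.le_sqrt_of_sq_le
  simp only [pt3, PiLp.continuousLinearEquiv_symm_apply, norm_eq_abs, sq_abs, Fin.sum_univ_three,
    Fin.isValue, Matrix.cons_val_zero, Matrix.cons_val_one, Matrix.cons_val,
    le_add_iff_nonneg_left]
  positivity

lemma pt3_ne_zero {x y z : ℝ} (hz : z ≠ 0) : pt3 x y z ≠ 0 := by
  intro h
  exact hz (by simpa [pt3] using congrArg (fun w : E³ => w 2) h)

@[fun_prop]
lemma Continuous.pt3 {α : Type*} [TopologicalSpace α] {f g h : α → ℝ}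
    (hf : Continuous f) (hg : Continuous g) (hh : Continuous h) :
    Continuous fun p => pt3 (f p) (g p) (h p) := by
  unfold _root_.pt3
  refine (EuclideanSpace.equiv (Fin 3) ℝ).symm.continuous.comp (continuous_pi fun i => ?_)
  fin_cases i <;> simpa

lemma smul_single_two_eq_pt3 (ρ : ℝ) : ρ • EuclideanSpace.single (2 : Fin 3) 1 = pt3 0 0 ρ := by
  ext i
  fin_cases i <;> simp [pt3]

noncomputable def tangentHelix (t v : ℝ) : E³ :=
  pt3 (t + v) (t ^ 2 + 2 * t * v) (t ^ 3 + 3 * t ^ 2 * v)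

lemma continuous_tangentHelix : Continuous fun p : ℝ × ℝ => tangentHelix p.1 p.2 := by
  unfold tangentHelix
  fun_prop

lemma inner_tangentHelix_sub (t s v ρ : ℝ) :
    inner ℝ (tangentHelix (t - s) v) (pt3 0 0 ρ) =
      inner ℝ (tangentHelix t v) (pt3 (3 * ρ * s ^ 2) (-(3 * ρ * s)) ρ) + -(ρ * s ^ 3) := by
  simp only [tangentHelix, inner_pt3]
  ring

lemma norm_integral_phase_tangentHelix_sub_le (lam : Measure (ℝ × ℝ)) {C β ρ : ℝ}
    (hC : 0 ≤ C) (hβ : 0 ≤ β) (hρ : 0 < ρ)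
    (hdecay : ∀ ξ : E³, ξ ≠ 0 →
      ‖mft (lam.map fun p : ℝ × ℝ => tangentHelix p.1 p.2) ξ‖ ≤ C * ‖ξ‖ ^ (-(β / 2)))
    (s : ℝ) :
    ‖∫ p, phase (pt3 0 0 ρ) (tangentHelix (p.1 - s) p.2) ∂lam‖ ≤ C * ρ ^ (-(β / 2)) := by
  set η := pt3 (3 * ρ * s ^ 2) (-(3 * ρ * s)) ρ
  calc ‖∫ p, phase (pt3 0 0 ρ) (tangentHelix (p.1 - s) p.2) ∂lam‖
      = ‖mft (lam.map fun p : ℝ × ℝ => tangentHelix p.1 p.2) η‖ := by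
        rw [mft_map lam continuous_tangentHelix.measurable]
        exact norm_integral_phase_eq_of_inner_eq_add lam _
          fun p => inner_tangentHelix_sub p.1 s p.2 ρ
    _ ≤ C * ‖η‖ ^ (-(β / 2)) := hdecay η (pt3_ne_zero hρ.ne')
    _ ≤ C * ρ ^ (-(β / 2)) := by
        refine mul_le_mul_of_nonneg_left ?_ hC
        exact Real.rpow_le_rpow_of_nonpos hρ (le_norm_pt3 _ _ _) (by linarith)

theorem statement4_general
    (lam : Measure (ℝ × ℝ))
    (Φ : ℝ → ℝ → EuclideanSpace ℝ (Fin 3))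
    (hΦ : ∀ t v, Φ t v = pt3 (t + v) (t ^ 2 + 2 * t * v) (t ^ 3 + 3 * t ^ 2 * v))
    (C β : ℝ) (hC : 0 < C) (hβ : 0 < β)
    (hdecay : ∀ ξ : EuclideanSpace ℝ (Fin 3), ξ ≠ 0 →
      ‖mft (lam.map fun p : ℝ × ℝ => Φ p.1 p.2) ξ‖ ≤ C * ‖ξ‖ ^ (-(β / 2)))
    (ψ : ℝ → ℝ) (hψsm : ContDiff ℝ (⊤ : ℕ∞) ψ) (hψcs : HasCompactSupport ψ)
    (hψnn : ∀ s, 0 ≤ ψ s)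
    (ν : Measure (EuclideanSpace ℝ (Fin 3)))
    (hν : ∀ f : EuclideanSpace ℝ (Fin 3) → ℂ, Measurable f →
      (∃ B : ℝ, ∀ x, ‖f x‖ ≤ B) →
      ∫ x, f x ∂ν = ∫ s : ℝ, (∫ p : ℝ × ℝ, f (Φ (p.1 - s) p.2) ∂lam) * ((ψ s : ℝ) : ℂ)) :
    ∀ ρ : ℝ, 0 < ρ →
      ‖mft ν (ρ • (EuclideanSpace.single (2 : Fin 3) 1))‖
        ≤ (C * ∫ s : ℝ, ψ s) * ρ ^ (-(β / 2)) := by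
  intro ρ hρ
  obtain rfl : Φ = tangentHelix := funext fun t => funext (hΦ t)
  have hψint : Integrable ψ := hψsm.continuous.integrable_of_hasCompactSupport hψcs
  have hbound := norm_integral_phase_tangentHelix_sub_le lam hC.le hβ.le hρ hdecay
  rw [smul_single_two_eq_pt3, mft_eq_integral_phase,
    hν _ (continuous_phase _).measurable ⟨1, fun x => (norm_phase _ x).le⟩]
  calc ‖∫ s, (∫ p, phase (pt3 0 0 ρ) (tangentHelix (p.1 - s) p.2) ∂lam) * ((ψ s : ℝ) : ℂ)‖
      ≤ ∫ s, C * ρ ^ (-(β / 2)) * ψ s := by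
        refine norm_integral_le_of_norm_le (hψint.const_mul _) (ae_of_all _ fun s => ?_)
        rw [norm_mul, Complex.norm_real, Real.norm_of_nonneg (hψnn s)]
        exact mul_le_mul_of_nonneg_right (hbound s) (hψnn s)
    _ = (C * ∫ s, ψ s) * ρ ^ (-(β / 2)) := by
        rw [integral_const_mul]
        ring

/-- Upper Fourier decay of the averaged measure `ν` on the tangent surface of the helix
`γ(t) = (t,t²,t³)` in the direction `e₃`: `|ν̂(ρe₃)| ≤ C‖ψ‖_{L¹} ρ^{−β/2}`. -/
theorem statement4 (a b c : ℝ) (ha : 0 < a) (hab : a < b) (hc : 0 < c) (h2c : 2 * c < a)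
    (lam : Measure (ℝ × ℝ)) (hlamfin : IsFiniteMeasure lam) (hlamne : lam ≠ 0)
    (hlamsupp : lam ((Set.Icc (-c) c ×ˢ Set.Icc a b)ᶜ) = 0)
    (Φ : ℝ → ℝ → EuclideanSpace ℝ (Fin 3))
    (hΦ : ∀ t v, Φ t v = pt3 (t + v) (t ^ 2 + 2 * t * v) (t ^ 3 + 3 * t ^ 2 * v))
    (C β : ℝ) (hC : 0 < C) (hβ : 0 < β)
    (hdecay : ∀ ξ : EuclideanSpace ℝ (Fin 3), ξ ≠ 0 →
      ‖mft (lam.map fun p : ℝ × ℝ => Φ p.1 p.2) ξ‖ ≤ C * ‖ξ‖ ^ (-(β / 2)))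
    (ψ : ℝ → ℝ) (hψsm : ContDiff ℝ (⊤ : ℕ∞) ψ) (hψcs : HasCompactSupport ψ)
    (hψnn : ∀ s, 0 ≤ ψ s) (hψ1 : ∀ s : ℝ, |s| ≤ c → ψ s = 1)
    (hψ0 : ∀ s : ℝ, 2 * c ≤ |s| → ψ s = 0)
    (ν : Measure (EuclideanSpace ℝ (Fin 3))) (hνfin : IsFiniteMeasure ν)
    (hν : ∀ f : EuclideanSpace ℝ (Fin 3) → ℂ, Measurable f →
      (∃ B : ℝ, ∀ x, ‖f x‖ ≤ B) →
      ∫ x, f x ∂ν = ∫ s : ℝ, (∫ p : ℝ × ℝ, f (Φ (p.1 - s) p.2) ∂lam) * ((ψ s : ℝ) : ℂ)) :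
    ∀ ρ : ℝ, 0 < ρ →
      ‖mft ν (ρ • (EuclideanSpace.single (2 : Fin 3) 1))‖
        ≤ (C * ∫ s : ℝ, ψ s) * ρ ^ (-(β / 2)) :=
  statement4_general lam Φ hΦ C β hC hβ hdecay ψ hψsm hψcs hψnn ν hν
end

section
/- Let μ₀ be a finite Borel measure on ℝ^n and α > 0 with sup_{ξ∈ℝ^n, ξ≠0} |ξ|^α |μ̂₀(ξ)| < ∞. Let f be a nonnegative Schwartz function on ℝ^n and let μ be the measure with dμ = f dμ₀. Then there is a constant c_μ > 0 such that |μ̂(ξ)| ≤ c_μ |ξ|^{−α} for all ξ ≠ 0. -/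
open MeasureTheory Real Set

/-!
By Fourier inversion `f(x) = ∫ e^{2πi x·η} 𝓕f(η) dη`, and Fubini turns `μ̂` into the convolution
`μ̂(ξ) = ∫ μ̂₀(ξ - η) 𝓕f(η) dη`. Where `|η| ≤ |ξ|/2` we have `|ξ - η| ≥ |ξ|/2`, so the decay of
`μ̂₀` gives `C₀ 2^α |ξ|^{-α}`; where `|η| > |ξ|/2` the trivial bound `|μ̂₀| ≤ μ₀(ℝⁿ)` is paid for
by the weight `1 ≤ (2|η|/|ξ|)^α`, which the rapid decay of `𝓕f` absorbs.
-/

open Filter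
open scoped FourierTransform RealInnerProductSpace SchwartzMap

theorem SchwartzMap.integrable_rpow_mul {D V : Type*} [NormedAddCommGroup D] [NormedSpace ℝ D]
    [MeasurableSpace D] [BorelSpace D] [SecondCountableTopology D]
    [NormedAddCommGroup V] [NormedSpace ℝ V] (μ : Measure D) [μ.HasTemperateGrowth]
    (f : 𝓢(D, V)) {a : ℝ} (ha : 0 ≤ a) : Integrable (fun x ↦ ‖x‖ ^ a * ‖f x‖) μ := by
  refine ((f.integrable_pow_mul μ 0).add (f.integrable_pow_mul μ ⌈a⌉₊)).mono'
    ((continuous_norm.rpow_const fun _ ↦ Or.inr ha).mul f.continuous.norm).aestronglyMeasurable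
    (Eventually.of_forall fun x ↦ ?_)
  rw [Pi.add_apply, norm_mul, norm_norm, Real.norm_of_nonneg (rpow_nonneg (norm_nonneg x) a),
    ← add_mul, pow_zero]
  gcongr
  rcases le_or_gt ‖x‖ 1 with hx | hx
  · exact (rpow_le_one (norm_nonneg _) hx ha).trans (le_add_of_nonneg_right (by positivity))
  · rw [← rpow_natCast]
    exact (rpow_le_rpow_of_exponent_le hx.le (Nat.le_ceil a)).trans
      (le_add_of_nonneg_left zero_le_one)

section Decay

variable {E : Type*} [NormedAddCommGroup E] {M C a : ℝ}

theorem norm_apply_sub_le_of_decay {F : Type*} [SeminormedAddCommGroup F] {φ : E → F}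
    (hM : ∀ ζ, ‖φ ζ‖ ≤ M) (hC : ∀ ζ, ζ ≠ 0 → ‖φ ζ‖ ≤ C * ‖ζ‖ ^ (-a)) (ha : 0 ≤ a)
    {ξ : E} (hξ : ξ ≠ 0) (η : E) :
    ‖φ (ξ - η)‖ ≤ 2 ^ a * (C + M * ‖η‖ ^ a) * ‖ξ‖ ^ (-a) := by
  have hξ₀ : 0 < ‖ξ‖ := norm_pos_iff.mpr hξ
  have hC₀ : 0 ≤ C := nonneg_of_mul_nonneg_left ((norm_nonneg _).trans (hC ξ hξ))
    (rpow_pos_of_pos hξ₀ _)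
  have hM₀ : 0 ≤ M := (norm_nonneg _).trans (hM 0)
  have hhalf : (‖ξ‖ / 2) ^ (-a) = 2 ^ a * ‖ξ‖ ^ (-a) := by
    rw [div_rpow (norm_nonneg _) zero_le_two, rpow_neg zero_le_two, div_inv_eq_mul, mul_comm]
  have hsplit : 2 ^ a * (C + M * ‖η‖ ^ a) * ‖ξ‖ ^ (-a)
      = C * (‖ξ‖ / 2) ^ (-a) + M * (‖η‖ / (‖ξ‖ / 2)) ^ a := by
    rw [div_eq_mul_inv ‖η‖, mul_rpow (norm_nonneg _) (by positivity), inv_rpow (by positivity),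
      ← rpow_neg (by positivity), hhalf]
    ring
  rw [hsplit]
  rcases le_or_gt ‖η‖ (‖ξ‖ / 2) with hη | hη
  · have hfar : ‖ξ‖ / 2 ≤ ‖ξ - η‖ := by linarith [norm_sub_norm_le ξ η]
    calc ‖φ (ξ - η)‖ ≤ C * ‖ξ - η‖ ^ (-a) :=
          hC _ (norm_pos_iff.mp (by linarith))
      _ ≤ C * (‖ξ‖ / 2) ^ (-a) :=
          mul_le_mul_of_nonneg_left
            (rpow_le_rpow_of_nonpos (by positivity) hfar (neg_nonpos.mpr ha)) hC₀
      _ ≤ _ := le_add_of_nonneg_right (by positivity)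
  · have hweight : 1 ≤ (‖η‖ / (‖ξ‖ / 2)) ^ a :=
      one_le_rpow ((one_le_div (by positivity)).mpr hη.le) ha
    calc ‖φ (ξ - η)‖ ≤ M := hM _
      _ ≤ M * (‖η‖ / (‖ξ‖ / 2)) ^ a := le_mul_of_one_le_right hM₀ hweight
      _ ≤ _ := le_add_of_nonneg_left (by positivity)

theorem norm_integral_apply_sub_mul_le_of_decay [MeasurableSpace E] (μ : Measure E)
    {φ G : E → ℂ} (hM : ∀ ζ, ‖φ ζ‖ ≤ M) (hC : ∀ ζ, ζ ≠ 0 → ‖φ ζ‖ ≤ C * ‖ζ‖ ^ (-a)) (ha : 0 ≤ a)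
    (hG : Integrable G μ) (hGa : Integrable (fun η ↦ ‖η‖ ^ a * ‖G η‖) μ) {ξ : E} (hξ : ξ ≠ 0) :
    ‖∫ η, φ (ξ - η) * G η ∂μ‖
      ≤ 2 ^ a * (C * ∫ η, ‖G η‖ ∂μ + M * ∫ η, ‖η‖ ^ a * ‖G η‖ ∂μ) * ‖ξ‖ ^ (-a) := by
  have hmajorant := (hG.norm.const_mul C).add (hGa.const_mul M)
  have hbound : ∀ η, ‖φ (ξ - η) * G η‖
      ≤ 2 ^ a * ‖ξ‖ ^ (-a) * (C * ‖G η‖ + M * (‖η‖ ^ a * ‖G η‖)) := fun η ↦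
    calc ‖φ (ξ - η) * G η‖ ≤ 2 ^ a * (C + M * ‖η‖ ^ a) * ‖ξ‖ ^ (-a) * ‖G η‖ := by
          rw [norm_mul]
          gcongr
          exact norm_apply_sub_le_of_decay hM hC ha hξ η
      _ = _ := by ring
  calc ‖∫ η, φ (ξ - η) * G η ∂μ‖ ≤ ∫ η, ‖φ (ξ - η) * G η‖ ∂μ := norm_integral_le_integral_norm _
    _ ≤ ∫ η, 2 ^ a * ‖ξ‖ ^ (-a) * (C * ‖G η‖ + M * (‖η‖ ^ a * ‖G η‖)) ∂μ :=
        integral_mono_of_nonneg (Eventually.of_forall fun _ ↦ norm_nonneg _)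
          (hmajorant.const_mul _) (Eventually.of_forall hbound)
    _ = _ := by
        rw [integral_const_mul, integral_add (hG.norm.const_mul C) (hGa.const_mul M),
          integral_const_mul, integral_const_mul]
        ring

end Decay

section MeasureFourier

variable {n : ℕ}

theorem mft_eq_integral_fourierChar (μ : Measure (EuclideanSpace ℝ (Fin n)))
    (ξ : EuclideanSpace ℝ (Fin n)) : mft μ ξ = ∫ x, (𝐞 (-⟪x, ξ⟫) : ℂ) ∂μ := by
  simp only [mft, Real.fourierChar_apply]
  congr with x
  push_cast
  ring_nf

theorem norm_mft_le_measureReal_univ (μ : Measure (EuclideanSpace ℝ (Fin n))) [IsFiniteMeasure μ]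
    (ξ : EuclideanSpace ℝ (Fin n)) : ‖mft μ ξ‖ ≤ μ.real univ := by
  rw [mft_eq_integral_fourierChar]
  simpa using norm_integral_le_of_norm_le_const (μ := μ)
    (Eventually.of_forall fun x ↦ (Circle.norm_coe (𝐞 (-⟪x, ξ⟫))).le)

theorem mft_withDensity_ofReal (μ₀ : Measure (EuclideanSpace ℝ (Fin n)))
    {f : EuclideanSpace ℝ (Fin n) → ℝ} (hf_meas : Measurable f) (hf : ∀ x, 0 ≤ f x)
    (ξ : EuclideanSpace ℝ (Fin n)) :
    mft (μ₀.withDensity fun x ↦ ENNReal.ofReal (f x)) ξ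
      = ∫ x, (f x : ℂ) * 𝐞 (-⟪x, ξ⟫) ∂μ₀ := by
  rw [mft_eq_integral_fourierChar, integral_withDensity_eq_integral_toReal_smul
    hf_meas.ennreal_ofReal (Eventually.of_forall fun _ ↦ ENNReal.ofReal_lt_top)]
  simp_rw [ENNReal.toReal_ofReal (hf _), Complex.real_smul]

theorem integral_fourierInv_mul_eq_integral_mft_sub_mul (μ₀ : Measure (EuclideanSpace ℝ (Fin n)))
    [IsFiniteMeasure μ₀] {G : EuclideanSpace ℝ (Fin n) → ℂ} (hG : Integrable G)
    (ξ : EuclideanSpace ℝ (Fin n)) :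
    ∫ x, 𝓕⁻ G x * 𝐞 (-⟪x, ξ⟫) ∂μ₀ = ∫ η, mft μ₀ (ξ - η) * G η := by
  have hkernel : ∀ x η : EuclideanSpace ℝ (Fin n),
      (𝐞 (-⟪x, ξ⟫) : ℂ) * (𝐞 ⟪η, x⟫ * G η) = 𝐞 (-⟪x, ξ - η⟫) * G η := fun x η ↦ by
    rw [← mul_assoc, ← Circle.coe_mul, ← AddChar.map_add_eq_mul, inner_sub_right,
      real_inner_comm η x, neg_sub, sub_eq_neg_add]
  have hint : Integrable (Function.uncurry fun x η ↦ (𝐞 (-⟪x, ξ - η⟫) : ℂ) * G η)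
      (μ₀.prod volume) := by
    have hG₂ : Integrable (fun p : _ × _ ↦ G p.2) (μ₀.prod volume) := by
      simpa using (integrable_const (1 : ℂ)).mul_prod (μ := μ₀) hG
    refine hG₂.bdd_mul (c := 1) ?_ (Eventually.of_forall fun p ↦ (Circle.norm_coe _).le)
    exact (continuous_subtype_val.comp (Real.continuous_fourierChar.comp
      (by fun_prop))).aestronglyMeasurable
  calc ∫ x, 𝓕⁻ G x * 𝐞 (-⟪x, ξ⟫) ∂μ₀
      = ∫ x, ∫ η, (𝐞 (-⟪x, ξ - η⟫) : ℂ) * G η ∂volume ∂μ₀ := by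
        refine integral_congr_ae (Eventually.of_forall fun x ↦ ?_)
        beta_reduce
        rw [fourierInv_eq, mul_comm (∫ _, _), ← integral_const_mul]
        congr 1 with η
        rw [← hkernel]
        rfl
    _ = ∫ η, ∫ x, (𝐞 (-⟪x, ξ - η⟫) : ℂ) * G η ∂μ₀ := integral_integral_swap hint
    _ = _ := by simp_rw [integral_mul_const, mft_eq_integral_fourierChar]

theorem mft_withDensity_eq_integral_mft_sub_mul_fourier (μ₀ : Measure (EuclideanSpace ℝ (Fin n)))
    [IsFiniteMeasure μ₀]
    (f : 𝓢(EuclideanSpace ℝ (Fin n), ℝ)) (hf : ∀ x, 0 ≤ f x) (ξ : EuclideanSpace ℝ (Fin n)) :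
    mft (μ₀.withDensity fun x ↦ ENNReal.ofReal (f x)) ξ
      = ∫ η, mft μ₀ (ξ - η) * 𝓕 (f.postcompCLM Complex.ofRealCLM) η := by
  set g := f.postcompCLM Complex.ofRealCLM
  have hinv : 𝓕⁻ (𝓕 (g : _ → ℂ)) = g :=
    g.continuous.fourierInv_fourier_eq g.integrable (𝓕 g).integrable
  rw [mft_withDensity_ofReal μ₀ f.continuous.measurable hf,
    ← integral_fourierInv_mul_eq_integral_mft_sub_mul μ₀ (𝓕 g).integrable,
    SchwartzMap.fourier_coe, hinv]
  rfl

end MeasureFourier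

/-- If `μ₀` is a finite Borel measure on `ℝ^n` with `sup_{ξ≠0} |ξ|^α |μ̂₀(ξ)| < ∞` and
`f ≥ 0` is a Schwartz function, then `μ` with `dμ = f dμ₀` satisfies
`|μ̂(ξ)| ≤ c_μ |ξ|^{−α}` for all `ξ ≠ 0`. -/
theorem statement14 (n : ℕ)
    (μ₀ : Measure (EuclideanSpace ℝ (Fin n))) (hμ₀ : IsFiniteMeasure μ₀)
    (a : ℝ) (ha : 0 < a) (C₀ : ℝ)
    (hdecay : ∀ ξ : EuclideanSpace ℝ (Fin n), ξ ≠ 0 →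
      ‖ξ‖ ^ a * ‖mft μ₀ ξ‖ ≤ C₀)
    (f : SchwartzMap (EuclideanSpace ℝ (Fin n)) ℝ) (hf : ∀ x, 0 ≤ f x)
    (μ : Measure (EuclideanSpace ℝ (Fin n)))
    (hμ : μ = μ₀.withDensity fun x => ENNReal.ofReal (f x)) :
    ∃ c : ℝ, 0 < c ∧ ∀ ξ : EuclideanSpace ℝ (Fin n), ξ ≠ 0 →
      ‖mft μ ξ‖ ≤ c * ‖ξ‖ ^ (-a) := by
  set G := 𝓕 (f.postcompCLM Complex.ofRealCLM)
  have hdecay' : ∀ ζ, ζ ≠ 0 → ‖mft μ₀ ζ‖ ≤ C₀ * ‖ζ‖ ^ (-a) := fun ζ hζ ↦ by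
    rw [rpow_neg (norm_nonneg _), ← div_eq_mul_inv,
      le_div_iff₀' (rpow_pos_of_pos (norm_pos_iff.mpr hζ) _)]
    exact hdecay ζ hζ
  set K := 2 ^ a * (C₀ * (∫ η, ‖G η‖) + μ₀.real univ * ∫ η, ‖η‖ ^ a * ‖G η‖)
  refine ⟨max K 1, one_pos.trans_le (le_max_right _ _), fun ξ hξ ↦ ?_⟩
  rw [hμ, mft_withDensity_eq_integral_mft_sub_mul_fourier μ₀ f hf]
  calc _ ≤ K * ‖ξ‖ ^ (-a) :=
        norm_integral_apply_sub_mul_le_of_decay volume (norm_mft_le_measureReal_univ μ₀) hdecay'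
          ha.le G.integrable (G.integrable_rpow_mul volume ha.le) hξ
    _ ≤ max K 1 * ‖ξ‖ ^ (-a) := by gcongr; exact le_max_left _ _
end
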